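/- arXiv:math/0606429 — 2 statements merged into one kernel-verified Lean document; each statement's English description precedes it below -/
import Mathlib

section
/- Let γ: [0,1] → S¹ be a continuous path in the unit circle (viewed as unit complex numbers) satisfying γ(1) = conj(γ(0)). Then γ is homotopic, through paths δ_t satisfying δ_t(1) = conj(δ_t(0)) for all t, to a constant path at 1 or at −1. -/
/-!
Lift `γ` through the covering `Circle.exp : ℝ → Circle` to `x : I → ℝ`. The endpoints of `γ` are
conjugate exactly when `exp (x 1 + x 0) = 1`, a condition on the sum of the endpoint angles only.
The straight-line homotopy from `x` to the constant path at the midpoint `(x 0 + x 1) / 2` keeps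
that sum fixed, and its final value, a self-conjugate point of the circle, is `1` or `-1`.
-/

open unitInterval ComplexConjugate

theorem exists_circleExp_lift (γ : C(I, ℂ)) (hγ : ∀ t, ‖γ t‖ = 1) :
    ∃ x : C(I, ℝ), ∀ t, (Circle.exp (x t) : ℂ) = γ t := by
  let γ' : C(I, Circle) := ⟨fun t ↦ ⟨γ t, mem_sphere_zero_iff_norm.2 (hγ t)⟩, by fun_prop⟩
  obtain ⟨e, he⟩ := Circle.exp_surjective (γ' 0)
  obtain ⟨x, hx, -⟩ := Circle.isCoveringMap_exp.exists_path_lifts γ' e he.symm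
  exact ⟨x, fun t ↦ congrArg Subtype.val (congrFun hx t)⟩

theorem Circle.coe_exp_eq_conj_iff (a b : ℝ) :
    (exp a : ℂ) = conj (exp b : ℂ) ↔ exp (a + b) = 1 := by
  rw [← coe_inv_eq_conj, coe_inj, exp_add, ← eq_inv_iff_mul_eq_one]

theorem eq_one_or_eq_neg_one_of_conj_eq {z : ℂ} (hz : ‖z‖ = 1) (hconj : conj z = z) :
    z = 1 ∨ z = -1 := by
  obtain ⟨r, rfl⟩ := Complex.conj_eq_iff_real.1 hconj
  rw [Complex.norm_real, Real.norm_eq_abs] at hz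
  rcases abs_eq (zero_le_one' ℝ) |>.1 hz with rfl | rfl <;> simp

/-- A path in the unit circle whose endpoints are complex conjugate is homotopic,
through paths with conjugate endpoints, to a constant path at `1` or at `−1`. -/
theorem stmt_6 (γ : C(unitInterval, ℂ)) (hγ : ∀ t, ‖γ t‖ = 1)
    (hends : γ 1 = starRingEnd ℂ (γ 0)) :
    ∃ H : C(unitInterval × unitInterval, ℂ),
      (∀ t s, ‖H (t, s)‖ = 1) ∧
      (∀ t, H (t, 1) = starRingEnd ℂ (H (t, 0))) ∧
      (∀ s, H (0, s) = γ s) ∧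
      (∃ c : ℂ, (c = 1 ∨ c = -1) ∧ ∀ s, H (1, s) = c) := by
  obtain ⟨x, hx⟩ := exists_circleExp_lift γ hγ
  have hsum : Circle.exp (x 1 + x 0) = 1 := by
    rwa [← Circle.coe_exp_eq_conj_iff, hx, hx]
  set m := (x 0 + x 1) / 2
  let F := ContinuousMap.Homotopy.affine x (.const I m)
  have hF : ∀ t, F (t, 1) + F (t, 0) = x 1 + x 0 := fun t ↦ by
    simp only [F, m, ContinuousMap.Homotopy.affine_apply, ContinuousMap.const_apply,
      AffineMap.lineMap_apply_module, smul_eq_mul]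
    ring
  refine ⟨⟨fun p ↦ Circle.exp (F p), (Circle.exp.continuous.comp F.continuous).subtype_val⟩,
    fun _ _ ↦ Circle.norm_coe _, fun t ↦ (Circle.coe_exp_eq_conj_iff _ _).2 (by rw [hF, hsum]),
    fun s ↦ by rw [ContinuousMap.coe_mk, F.apply_zero, hx],
    Circle.exp m, ?_, fun s ↦ by rw [ContinuousMap.coe_mk, F.apply_one]; rfl⟩
  refine eq_one_or_eq_neg_one_of_conj_eq (Circle.norm_coe _)
    ((Circle.coe_exp_eq_conj_iff m m).2 ?_).symm
  rwa [add_halves, add_comm]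
end

section
/- Let k', k'', l be nonnegative integers, k_b = k' + k'', let μ be an integer, r ∈ {0, −1}, and w'_b, w'' ∈ {0, 1}. Assume: μ + r = k'' + 2l; μ ≡ w'' (mod 2); and w'_b + w'' ≡ k_b + 1 (mod 2). Define Υ'' ≡ (w'_b + w'')(k'' − 1) + w''·k' (mod 2). Then μ(μ−1)/2 + k'' + 1 + l + Υ'' + w'_b·w'' + (k''−1)(k''−2)/2 + k_b·k'' + k_b ≡ 1 (mod 2). -/
lemma auxdvd (m : ℤ) : (2:ℤ) ∣ m * (m - 1) := by
  obtain ⟨t, ht⟩ := Int.even_mul_succ_self (m - 1)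
  exact ⟨t, by linear_combination ht⟩

lemma auxdouble (a b : ℤ) (h : a ≡ b [ZMOD 2]) : 2*a ≡ 2*b [ZMOD 4] := by
  unfold Int.ModEq at *; omega

lemma auxhalve (a : ℤ) (h : 2*a ≡ 2*1 [ZMOD 4]) : a ≡ 1 [ZMOD 2] := by
  unfold Int.ModEq at *; omega

set_option synthInstance.maxSize 4000 in
set_option maxHeartbeats 1000000 in
/-- The sign `𝔰^{#''}_−` equals `1` mod 2 on nonempty boundary strata when `dim X = 4`. -/
theorem stmt_13 (k' k'' l kb μ r w'b w'' Y : ℤ)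
    (hk' : 0 ≤ k') (hk'' : 0 ≤ k'') (hl : 0 ≤ l) (hkb : kb = k' + k'')
    (hr : r = 0 ∨ r = -1) (hw'b : w'b = 0 ∨ w'b = 1) (hw'' : w'' = 0 ∨ w'' = 1)
    (hdim : μ + r = k'' + 2 * l)
    (hmu : μ ≡ w'' [ZMOD 2])
    (hka : w'b + w'' ≡ kb + 1 [ZMOD 2])
    (hY : Y ≡ (w'b + w'') * (k'' - 1) + w'' * k' [ZMOD 2]) :
    μ * (μ - 1) / 2 + k'' + 1 + l + Y + w'b * w''
      + (k'' - 1) * (k'' - 2) / 2 + kb * k'' + kb ≡ 1 [ZMOD 2] := by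
  subst hkb
  obtain ⟨t1, ht1⟩ := auxdvd μ
  obtain ⟨t2, ht2⟩ := auxdvd (k'' - 1)
  have e1 : μ * (μ - 1) / 2 = t1 := by
    set p := μ * (μ - 1) with hp
    omega
  have e2 : (k'' - 1) * ((k'' - 1) - 1) / 2 = t2 := by
    set q := (k'' - 1) * ((k'' - 1) - 1) with hq
    omega
  have e2' : (k'' - 1) * (k'' - 2) / 2 = t2 := by rw [← e2]; ring_nf
  rw [e1, e2']
  have hμ : μ = k'' + 2 * l - r := by omega
  subst hμ
  clear hdim hk' hk'' hl e1 e2 e2'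
  rcases hr with hr | hr <;> rcases hw'b with hb | hb <;> rcases hw'' with hc | hc <;>
    subst hr hb hc <;>
  · have hmu4 := auxdouble _ _ hmu
    have hka4 := auxdouble _ _ hka
    have hY4 := auxdouble _ _ hY
    apply auxhalve
    have ht1' := congrArg (fun z : ℤ => (z : ZMod 4)) ht1
    have ht2' := congrArg (fun z : ℤ => (z : ZMod 4)) ht2
    have hmu4' := (ZMod.intCast_eq_intCast_iff _ _ 4).mpr hmu4
    have hka4' := (ZMod.intCast_eq_intCast_iff _ _ 4).mpr hka4
    have hY4' := (ZMod.intCast_eq_intCast_iff _ _ 4).mpr hY4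
    refine (ZMod.intCast_eq_intCast_iff _ _ 4).mp ?_
    push_cast at hmu4' hka4' hY4' ht1' ht2' ⊢
    revert hmu4' hka4' hY4' ht1' ht2'
    generalize ((k' : ZMod 4)) = x
    generalize ((k'' : ZMod 4)) = y
    generalize ((l : ZMod 4)) = zl
    generalize ((Y : ZMod 4)) = yv
    generalize ((t1 : ZMod 4)) = u
    generalize ((t2 : ZMod 4)) = v
    revert x y zl yv u v
    decide
end
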